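/- arXiv:1703.00407 — 2 statements merged into one kernel-verified Lean document; each statement's English description precedes it below -/
import Mathlib

section
/- Let X be a topological space and let (H_n : X × [0,1] → X) be a sequence of continuous maps with H_n(x,1) = H_{n+1}(x,0) for all x and n. Suppose there is an increasing sequence of subsets S_1 ⊆ S_2 ⊆ ⋯ of X whose interiors cover X, and a map g : X → X such that for all n, all x ∈ S_n, and all t ∈ [0,1], H_n(x,t) = g(x). Then the map H : X × [0,1] → X defined by H(x,t) = H_n(x, ζ_n(t)) for t ∈ [(n-1)/n, n/(n+1)] and H(x,1) = g(x), where ζ_n(t) = n(n+1)(t - (n-1)/n), is well-defined and continuous. -/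
open Set

noncomputable def homIdx (t : ℝ) : ℕ := ⌊1/(1-t)⌋₊

noncomputable def homZeta (n : ℕ) (t : ℝ) : ℝ :=
  (n:ℝ) * ((n:ℝ)+1) * (t - ((n:ℝ)-1)/(n:ℝ))

noncomputable def homProj (r : ℝ) : unitInterval := Set.projIcc (0:ℝ) 1 zero_le_one r

lemma homProj_continuous : Continuous homProj := by unfold homProj; exact continuous_projIcc

lemma homProj_zero : homProj 0 = 0 := by
  apply Subtype.ext
  rw [homProj, Set.coe_projIcc]
  norm_num

lemma homProj_one : homProj 1 = 1 := by
  apply Subtype.ext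
  rw [homProj, Set.coe_projIcc]
  norm_num

lemma homIdx_one_le {t : ℝ} (h0 : 0 ≤ t) (h1 : t < 1) : 1 ≤ homIdx t := by
  have h0' : (0:ℝ) < 1 - t := by linarith
  have h : (1:ℝ) ≤ 1/(1-t) := by
    rw [le_div_iff₀ h0']; linarith
  exact Nat.le_floor (by exact_mod_cast h)

lemma homIdx_spec {t : ℝ} (h0 : 0 ≤ t) (h1 : t < 1) :
    ((homIdx t : ℝ) - 1)/(homIdx t) ≤ t ∧ t < (homIdx t)/((homIdx t)+1) := by
  have h0' : (0:ℝ) < 1 - t := by linarith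
  have hn1 := homIdx_one_le h0 h1
  have npos : (0:ℝ) < (homIdx t : ℝ) := by exact_mod_cast hn1
  have hfl : ((homIdx t : ℕ) : ℝ) ≤ 1/(1-t) := Nat.floor_le (by positivity)
  have hfu : 1/(1-t) < (homIdx t : ℝ) + 1 := Nat.lt_floor_add_one _
  have hfl' : ((homIdx t : ℝ)) * (1-t) ≤ 1 := by
    rw [← le_div_iff₀ h0']; exact hfl
  have hfu' : 1 < ((homIdx t : ℝ) + 1) * (1-t) := by
    rw [← div_lt_iff₀ h0']; exact hfu
  constructor
  · rw [div_le_iff₀ npos]; nlinarith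
  · rw [lt_div_iff₀ (by positivity)]; nlinarith

lemma homIdx_eq {n : ℕ} (hn : 1 ≤ n) {t : ℝ}
    (h1 : ((n:ℝ)-1)/(n:ℝ) ≤ t) (h2 : t < (n:ℝ)/((n:ℝ)+1)) : homIdx t = n := by
  have npos : (0:ℝ) < (n:ℝ) := by exact_mod_cast hn
  have ht1 : t < 1 := lt_of_lt_of_le h2 (by rw [div_le_one (by positivity)]; linarith)
  have h0' : (0:ℝ) < 1 - t := by linarith
  have ha : (n:ℝ) - 1 ≤ t * n := (div_le_iff₀ npos).mp h1
  have hb : t * ((n:ℝ)+1) < n := (lt_div_iff₀ (by positivity)).mp h2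
  rw [homIdx, Nat.floor_eq_iff' (by omega)]
  constructor
  · rw [le_div_iff₀ h0']; nlinarith
  · rw [div_lt_iff₀ h0']; nlinarith

lemma homIdx_ge {n : ℕ} {t : ℝ} (h1 : ((n:ℝ)-1)/(n:ℝ) < t) (ht1 : t < 1) :
    n ≤ homIdx t := by
  rcases Nat.eq_zero_or_pos n with h | h
  · omega
  have npos : (0:ℝ) < (n:ℝ) := by exact_mod_cast h
  have h0' : (0:ℝ) < 1 - t := by linarith
  have ha : (n:ℝ) - 1 < t * n := (div_lt_iff₀ npos).mp h1
  apply Nat.le_floor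
  rw [le_div_iff₀ h0']; nlinarith

lemma homZeta_mem {n : ℕ} (hn : 1 ≤ n) {t : ℝ}
    (h1 : ((n:ℝ)-1)/(n:ℝ) ≤ t) (h2 : t ≤ (n:ℝ)/((n:ℝ)+1)) :
    homZeta n t ∈ Icc (0:ℝ) 1 := by
  have npos : (0:ℝ) < (n:ℝ) := by exact_mod_cast hn
  have ha : (n:ℝ) - 1 ≤ t * n := (div_le_iff₀ npos).mp h1
  have hb : t * ((n:ℝ)+1) ≤ n := (le_div_iff₀ (by positivity)).mp h2
  have key : homZeta n t = (n:ℝ)*((n:ℝ)+1)*t - ((n:ℝ)^2 - 1) := by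
    rw [homZeta]; field_simp; ring
  constructor
  · rw [key]; nlinarith
  · rw [key]; nlinarith

theorem stmt2 {X : Type*} [TopologicalSpace X]
    (H : ℕ → X × unitInterval → X) (hHcont : ∀ n : ℕ, 1 ≤ n → Continuous (H n))
    (hmatch : ∀ n : ℕ, 1 ≤ n → ∀ x, H n (x, 1) = H (n+1) (x, 0))
    (S : ℕ → Set X) (hmono : Monotone S)
    (hcover : ∀ x, ∃ n, x ∈ interior (S n))
    (g : X → X)
    (hg : ∀ n : ℕ, 1 ≤ n → ∀ x ∈ S n, ∀ t : unitInterval, H n (x, t) = g x) :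
    ∃ K : X × unitInterval → X, Continuous K ∧
      (∀ x, K (x, 1) = g x) ∧
      (∀ n : ℕ, 1 ≤ n → ∀ x : X, ∀ t : unitInterval,
        ((n:ℝ)-1)/(n:ℝ) ≤ (t:ℝ) → (t:ℝ) ≤ (n:ℝ)/((n:ℝ)+1) →
        ∀ h01 : (n:ℝ) * ((n:ℝ)+1) * ((t:ℝ) - ((n:ℝ)-1)/(n:ℝ)) ∈ unitInterval,
          K (x, t) = H n (x, ⟨(n:ℝ) * ((n:ℝ)+1) * ((t:ℝ) - ((n:ℝ)-1)/(n:ℝ)), h01⟩)) := by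
  classical
  set K : X × unitInterval → X := fun p =>
    if h : ((p.2 : ℝ)) < 1 then
      H (homIdx (p.2 : ℝ)) (p.1, homProj (homZeta (homIdx (p.2 : ℝ)) (p.2 : ℝ)))
    else g p.1 with hKdef
  have hKlt : ∀ (x : X) (t : unitInterval), (t:ℝ) < 1 →
      K (x, t) = H (homIdx (t:ℝ)) (x, homProj (homZeta (homIdx (t:ℝ)) (t:ℝ))) := by
    intro x t ht
    simp only [hKdef]
    rw [dif_pos ht]
  have hK1 : ∀ (x : X) (t : unitInterval), ¬ ((t:ℝ) < 1) → K (x, t) = g x := by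
    intro x t ht
    simp only [hKdef]
    rw [dif_neg ht]
  have hFc : ∀ n : ℕ, 1 ≤ n →
      Continuous (fun p : X × unitInterval => H n (p.1, homProj (homZeta n (p.2 : ℝ)))) := by
    intro n hn
    apply (hHcont n hn).comp
    apply Continuous.prodMk continuous_fst
    apply homProj_continuous.comp
    have : Continuous (fun p : X × unitInterval => (p.2 : ℝ)) :=
      continuous_subtype_val.comp continuous_snd
    unfold homZeta
    fun_prop
  refine ⟨K, ?_, ?_, ?_⟩
  · -- Continuity
    rw [continuous_iff_continuousAt]
    rintro ⟨x₀, t₀⟩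
    by_cases h1 : (t₀ : ℝ) < 1
    · -- t₀ < 1
      set n := homIdx (t₀ : ℝ) with hn
      have hn1 : 1 ≤ n := homIdx_one_le t₀.2.1 h1
      have npos : (0:ℝ) < (n:ℝ) := by exact_mod_cast hn1
      obtain ⟨hle, hlt⟩ := homIdx_spec t₀.2.1 h1
      rw [← hn] at hle hlt
      by_cases hb : ((n:ℝ)-1)/(n:ℝ) < (t₀:ℝ) ∨ ((n:ℝ)-1)/(n:ℝ) ≤ 0
      · -- "interior" case
        obtain ⟨lo, hlo1, hlo2⟩ : ∃ lo : ℝ, lo < (t₀:ℝ) ∧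
            ∀ t : unitInterval, lo < (t:ℝ) → ((n:ℝ)-1)/(n:ℝ) ≤ (t:ℝ) := by
          rcases hb with h | h
          · exact ⟨((n:ℝ)-1)/(n:ℝ), h, fun t ht => le_of_lt ht⟩
          · exact ⟨-1, by linarith [t₀.2.1], fun t _ => le_trans h t.2.1⟩
        set V : Set (X × unitInterval) :=
          {p | lo < (p.2:ℝ) ∧ (p.2:ℝ) < (n:ℝ)/((n:ℝ)+1)} with hV
        have hVopen : IsOpen V := by
          have hc : Continuous (fun p : X × unitInterval => (p.2 : ℝ)) :=
            continuous_subtype_val.comp continuous_snd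
          exact (isOpen_Ioo.preimage hc)
        have hmemV : (x₀, t₀) ∈ V := ⟨hlo1, hlt⟩
        have heq : EqOn K (fun p : X × unitInterval => H n (p.1, homProj (homZeta n (p.2:ℝ)))) V := by
          rintro ⟨x, t⟩ ⟨h2, h3⟩
          have h2' : lo < (t:ℝ) := h2
          have h3' : (t:ℝ) < (n:ℝ)/((n:ℝ)+1) := h3
          have ht1 : (t:ℝ) < 1 :=
            lt_of_lt_of_le h3' (by rw [div_le_one (by positivity)]; linarith)
          have hidx : homIdx (t:ℝ) = n := homIdx_eq hn1 (hlo2 t h2') h3'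
          rw [hKlt x t ht1, hidx]
        exact ((hFc n hn1).continuousAt).congr
          (Filter.eventuallyEq_of_mem (hVopen.mem_nhds hmemV) heq).symm
      · -- boundary case : t₀ = (n-1)/n with n ≥ 2
        push_neg at hb
        obtain ⟨hb1, hb2⟩ := hb
        have ht₀eq : (t₀:ℝ) = ((n:ℝ)-1)/(n:ℝ) := le_antisymm hb1 hle
        have hn2 : 2 ≤ n := by
          by_contra h
          have : n = 1 := by omega
          rw [this] at hb2
          norm_num at hb2
        set m := n - 1 with hm
        have hm1 : 1 ≤ m := by omega
        have hnm : n = m + 1 := by omega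
        have hnmR : (n:ℝ) = (m:ℝ) + 1 := by rw [hnm]; push_cast; ring
        have mpos : (0:ℝ) < (m:ℝ) := by exact_mod_cast hm1
        have ht₀m : (t₀:ℝ) = (m:ℝ)/((m:ℝ)+1) := by
          rw [ht₀eq, hnmR]; ring_nf
        -- K (x₀,t₀) value lemma at boundary column:
        have hcol : ∀ (x : X) (t : unitInterval), (t:ℝ) = (t₀:ℝ) →
            K (x, t) = H m (x, homProj (homZeta m (t:ℝ))) := by
          intro x t hteq
          have ht1 : (t:ℝ) < 1 := by rw [hteq]; exact h1
          have hidx : homIdx (t:ℝ) = n := by rw [hteq, ← hn]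
          have hz1 : homZeta n (t:ℝ) = 0 := by
            rw [hteq, ht₀eq, homZeta]; ring
          have hz2 : homZeta m (t:ℝ) = 1 := by
            rw [hteq, ht₀m, homZeta]; field_simp; ring
          rw [hKlt x t ht1, hidx, hz1, hz2, homProj_zero, homProj_one, hnm]
          exact (hmatch m hm1 x).symm
        -- left piece
        have hL : ContinuousWithinAt K {p : X × unitInterval | (p.2:ℝ) ≤ (t₀:ℝ)} (x₀, t₀) := by
          set W : Set (X × unitInterval) := {p | ((m:ℝ)-1)/(m:ℝ) < (p.2:ℝ)} with hW
          have hWopen : IsOpen W := by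
            have hc : Continuous (fun p : X × unitInterval => (p.2 : ℝ)) :=
              continuous_subtype_val.comp continuous_snd
            exact (isOpen_Ioi.preimage hc)
          have hmemW : (x₀, t₀) ∈ W := by
            show ((m:ℝ)-1)/(m:ℝ) < (t₀:ℝ)
            rw [ht₀m, div_lt_div_iff₀ mpos (by positivity)]
            nlinarith
          have heq : EqOn K (fun p : X × unitInterval => H m (p.1, homProj (homZeta m (p.2:ℝ))))
              ({p : X × unitInterval | (p.2:ℝ) ≤ (t₀:ℝ)} ∩ W) := by
            rintro ⟨x, t⟩ ⟨hts, htW⟩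
            have hts' : (t:ℝ) ≤ (t₀:ℝ) := hts
            have htW' : ((m:ℝ)-1)/(m:ℝ) < (t:ℝ) := htW
            rcases eq_or_lt_of_le hts' with hteq | htlt
            · exact hcol x t hteq
            · have htm : (t:ℝ) < (m:ℝ)/((m:ℝ)+1) := by rw [← ht₀m]; exact htlt
              have ht1 : (t:ℝ) < 1 := lt_trans htlt h1
              have hidx : homIdx (t:ℝ) = m := homIdx_eq hm1 (le_of_lt htW') htm
              rw [hKlt x t ht1, hidx]
          have hmem' : ({p : X × unitInterval | (p.2:ℝ) ≤ (t₀:ℝ)} ∩ W) ∈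
              nhdsWithin (x₀, t₀) {p : X × unitInterval | (p.2:ℝ) ≤ (t₀:ℝ)} :=
            Filter.inter_mem self_mem_nhdsWithin
              (mem_nhdsWithin_of_mem_nhds (hWopen.mem_nhds hmemW))
          exact ((hFc m hm1).continuousAt.continuousWithinAt).congr_of_eventuallyEq
            (Filter.eventuallyEq_of_mem hmem' heq)
            (hcol x₀ t₀ rfl)
        -- right piece
        have hR : ContinuousWithinAt K {p : X × unitInterval | (t₀:ℝ) ≤ (p.2:ℝ)} (x₀, t₀) := by
          set W : Set (X × unitInterval) := {p | (p.2:ℝ) < (n:ℝ)/((n:ℝ)+1)} with hW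
          have hWopen : IsOpen W := by
            have hc : Continuous (fun p : X × unitInterval => (p.2 : ℝ)) :=
              continuous_subtype_val.comp continuous_snd
            exact (isOpen_Iio.preimage hc)
          have hmemW : (x₀, t₀) ∈ W := hlt
          have heq : EqOn K (fun p : X × unitInterval => H n (p.1, homProj (homZeta n (p.2:ℝ))))
              ({p : X × unitInterval | (t₀:ℝ) ≤ (p.2:ℝ)} ∩ W) := by
            rintro ⟨x, t⟩ ⟨hts, htW⟩
            have hts' : (t₀:ℝ) ≤ (t:ℝ) := hts
            have htW' : (t:ℝ) < (n:ℝ)/((n:ℝ)+1) := htW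
            have ht1 : (t:ℝ) < 1 :=
              lt_of_lt_of_le htW' (by rw [div_le_one (by positivity)]; linarith)
            have hidx : homIdx (t:ℝ) = n := homIdx_eq hn1 (ht₀eq ▸ hts') htW'
            rw [hKlt x t ht1, hidx]
          have hmem' : ({p : X × unitInterval | (t₀:ℝ) ≤ (p.2:ℝ)} ∩ W) ∈
              nhdsWithin (x₀, t₀) {p : X × unitInterval | (t₀:ℝ) ≤ (p.2:ℝ)} :=
            Filter.inter_mem self_mem_nhdsWithin
              (mem_nhdsWithin_of_mem_nhds (hWopen.mem_nhds hmemW))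
          have hval : K (x₀, t₀) = H n (x₀, homProj (homZeta n (t₀:ℝ))) := by
            rw [hKlt x₀ t₀ h1, ← hn]
          exact ((hFc n hn1).continuousAt.continuousWithinAt).congr_of_eventuallyEq
            (Filter.eventuallyEq_of_mem hmem' heq) hval
        rw [← continuousWithinAt_univ]
        apply (hL.union hR).mono
        intro p _
        exact (le_total (p.2:ℝ) (t₀:ℝ)).imp (fun h => h) (fun h => h)
    · -- t₀ = 1
      obtain ⟨n₀, hx₀⟩ := hcover x₀
      set n := max n₀ 1 with hn
      have hn1 : 1 ≤ n := le_max_right _ _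
      have npos : (0:ℝ) < (n:ℝ) := by exact_mod_cast hn1
      have hx : x₀ ∈ interior (S n) := interior_mono (hmono (le_max_left _ _)) hx₀
      set U : Set (X × unitInterval) :=
        {p | p.1 ∈ interior (S n) ∧ ((n:ℝ)-1)/(n:ℝ) < (p.2:ℝ)} with hU
      have hUopen : IsOpen U := by
        have hc : Continuous (fun p : X × unitInterval => (p.2 : ℝ)) :=
          continuous_subtype_val.comp continuous_snd
        exact (isOpen_interior.preimage continuous_fst).inter (isOpen_Ioi.preimage hc)
      have hmemU : (x₀, t₀) ∈ U := by
        refine ⟨hx, ?_⟩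
        have : (t₀:ℝ) = 1 := le_antisymm t₀.2.2 (not_lt.mp h1)
        rw [this, div_lt_one npos]
        linarith
      have heq : EqOn K (fun p : X × unitInterval => H n (p.1, 0)) U := by
        rintro ⟨x, t⟩ ⟨hxS, htS⟩
        have htS' : ((n:ℝ)-1)/(n:ℝ) < (t:ℝ) := htS
        have hxSn : x ∈ S n := interior_subset hxS
        by_cases ht : (t:ℝ) < 1
        · have hmge : n ≤ homIdx (t:ℝ) := homIdx_ge htS' ht
          have hm1 : 1 ≤ homIdx (t:ℝ) := le_trans hn1 hmge
          rw [hKlt x t ht, hg _ hm1 x (hmono hmge hxSn) _]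
          exact (hg n hn1 x hxSn 0).symm
        · rw [hK1 x t ht]
          exact (hg n hn1 x hxSn 0).symm
      have hGc : Continuous (fun p : X × unitInterval => H n (p.1, 0)) :=
        (hHcont n hn1).comp (continuous_fst.prodMk continuous_const)
      exact hGc.continuousAt.congr
        (Filter.eventuallyEq_of_mem (hUopen.mem_nhds hmemU) heq).symm
  · -- K (x,1) = g x
    intro x
    apply hK1
    norm_num
  · -- interval formula
    intro n hn x t hle hge h01
    have npos : (0:ℝ) < (n:ℝ) := by exact_mod_cast hn
    have ht1 : (t:ℝ) < 1 :=
      lt_of_le_of_lt hge (by rw [div_lt_one (by positivity)]; linarith)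
    have hproj : homProj ((n:ℝ) * ((n:ℝ)+1) * ((t:ℝ) - ((n:ℝ)-1)/(n:ℝ))) =
        (⟨(n:ℝ) * ((n:ℝ)+1) * ((t:ℝ) - ((n:ℝ)-1)/(n:ℝ)), h01⟩ : unitInterval) :=
      Set.projIcc_of_mem _ h01
    rcases lt_or_eq_of_le hge with hlt | heq2
    · have hidx : homIdx (t:ℝ) = n := homIdx_eq hn hle hlt
      rw [hKlt x t ht1, hidx]
      rw [show homZeta n (t:ℝ) = (n:ℝ) * ((n:ℝ)+1) * ((t:ℝ) - ((n:ℝ)-1)/(n:ℝ)) from rfl, hproj]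
    · -- t = n/(n+1)
      have hle' : (((n+1:ℕ):ℝ) - 1)/((n+1:ℕ):ℝ) ≤ (t:ℝ) := by
        push_cast
        rw [heq2]
        apply le_of_eq
        ring
      have hlt' : (t:ℝ) < ((n+1:ℕ):ℝ)/(((n+1:ℕ):ℝ)+1) := by
        push_cast
        rw [heq2, div_lt_div_iff₀ (by positivity) (by positivity)]
        nlinarith
      have hidx : homIdx (t:ℝ) = n + 1 := homIdx_eq (by omega) hle' hlt'
      have hz : homZeta (n+1) (t:ℝ) = 0 := by
        rw [homZeta, heq2]
        push_cast
        ring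
      have hz1 : (n:ℝ) * ((n:ℝ)+1) * ((t:ℝ) - ((n:ℝ)-1)/(n:ℝ)) = 1 := by
        rw [heq2]; field_simp; ring
      have hone : (⟨(n:ℝ) * ((n:ℝ)+1) * ((t:ℝ) - ((n:ℝ)-1)/(n:ℝ)), h01⟩ : unitInterval) = 1 := by
        apply Subtype.ext
        rw [Subtype.coe_mk, hz1]
        norm_num
      rw [hKlt x t ht1, hidx, hz, homProj_zero, hone, ← hmatch n hn x]
end

section
/- Let X be a topological space and g_1, g_2, g_3, … : X → X a sequence of continuous maps such that for each n, g_n is homotopic to g_{n+1} relative to a set S_n, where S_1 ⊆ S_2 ⊆ ⋯ have interiors covering X, and let g : X → X be defined by g(x) = g_n(x) whenever x ∈ S_n (this being well-defined); then g is continuous and g_1 is homotopic to g. -/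
noncomputable section

/-- breakpoints -/
def stmt4tpt (n : ℕ) : ℝ := n / (n + 1)

/-- interval index -/
def stmt4N (t : ℝ) : ℕ := ⌊t / (1 - t)⌋₊

lemma stmt4tpt_zero : stmt4tpt 0 = 0 := by simp [stmt4tpt]

lemma stmt4tpt_nonneg (n : ℕ) : 0 ≤ stmt4tpt n := by
  unfold stmt4tpt; positivity

lemma stmt4tpt_lt_one (n : ℕ) : stmt4tpt n < 1 := by
  unfold stmt4tpt
  rw [div_lt_one (by positivity)]
  linarith

lemma stmt4tpt_le_iff {t : ℝ} (ht : t < 1) (n : ℕ) :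
    stmt4tpt n ≤ t ↔ (n : ℝ) ≤ t / (1 - t) := by
  unfold stmt4tpt
  rw [div_le_iff₀ (by positivity), le_div_iff₀ (by linarith)]
  constructor <;> intro h <;> nlinarith

lemma stmt4tpt_mono {m n : ℕ} (h : m < n) : stmt4tpt m < stmt4tpt n := by
  unfold stmt4tpt
  rw [div_lt_div_iff₀ (by positivity) (by positivity)]
  have : (m:ℝ) < n := by exact_mod_cast h
  nlinarith

lemma stmt4tpt_mono' {m n : ℕ} (h : m ≤ n) : stmt4tpt m ≤ stmt4tpt n := by
  rcases eq_or_lt_of_le h with rfl | h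
  · exact le_rfl
  · exact (stmt4tpt_mono h).le

lemma stmt4N_le {t : ℝ} (ht0 : 0 ≤ t) (ht1 : t < 1) : stmt4tpt (stmt4N t) ≤ t := by
  rw [stmt4tpt_le_iff ht1]
  exact Nat.floor_le (div_nonneg ht0 (by linarith))

lemma stmt4N_lt {t : ℝ} (ht0 : 0 ≤ t) (ht1 : t < 1) : t < stmt4tpt (stmt4N t + 1) := by
  by_contra h
  push_neg at h
  rw [stmt4tpt_le_iff ht1] at h
  have h2 := Nat.lt_floor_add_one (t / (1 - t))
  have : ((stmt4N t + 1 : ℕ) : ℝ) = (⌊t / (1 - t)⌋₊ : ℝ) + 1 := by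
    unfold stmt4N; push_cast; ring
  rw [this] at h
  linarith

lemma stmt4N_eq {t : ℝ} (ht1 : t < 1) {n : ℕ} (h1 : stmt4tpt n ≤ t)
    (h2 : t < stmt4tpt (n + 1)) : stmt4N t = n := by
  have ht0 : 0 ≤ t := le_trans (stmt4tpt_nonneg n) h1
  rw [stmt4tpt_le_iff ht1] at h1
  have h2' : t / (1-t) < (n:ℝ) + 1 := by
    by_contra h
    push_neg at h
    have : ((n+1 : ℕ) : ℝ) ≤ t / (1 - t) := by push_cast; linarith
    rw [← stmt4tpt_le_iff ht1] at this
    linarith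
  exact Nat.floor_eq_iff (div_nonneg ht0 (by linarith)) |>.2 ⟨h1, by exact h2'⟩

lemma stmt4N_ge {t : ℝ} (ht0 : 0 ≤ t) (ht1 : t < 1) {m : ℕ} (h : stmt4tpt m ≤ t) :
    m ≤ stmt4N t := by
  by_contra hc
  push_neg at hc
  have h2 := stmt4N_lt ht0 ht1
  have := stmt4tpt_mono' (show stmt4N t + 1 ≤ m by omega)
  linarith

/-- local time rescaling -/
def stmt4s (n : ℕ) (t : ℝ) : ℝ := (t - stmt4tpt n) * ((n + 1) * (n + 2))

lemma stmt4s_self (n : ℕ) : stmt4s n (stmt4tpt n) = 0 := by simp [stmt4s]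

lemma stmt4s_succ (n : ℕ) : stmt4s n (stmt4tpt (n + 1)) = 1 := by
  unfold stmt4s stmt4tpt
  push_cast
  field_simp
  ring

lemma stmt4s_continuous (n : ℕ) : Continuous (stmt4s n) := by
  unfold stmt4s; fun_prop

end

open Set unitInterval ContinuousMap

theorem stmt4 {X : Type*} [TopologicalSpace X]
    (gs : ℕ → C(X, X)) (S : ℕ → Set X) (hmono : Monotone S)
    (hcover : ∀ x, ∃ n, 1 ≤ n ∧ x ∈ interior (S n))
    (hhom : ∀ n, 1 ≤ n → (gs n).HomotopicRel (gs (n+1)) (S n))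
    (g : X → X)
    (hg : ∀ n, 1 ≤ n → ∀ x ∈ S n, g x = gs n x) :
    ∃ hc : Continuous g, (gs 1).Homotopic ⟨g, hc⟩ := by
  classical
  have F : ∀ n : ℕ, (gs (n+1)).HomotopyRel (gs (n+2)) (S (n+1)) :=
    fun n => (hhom (n+1) (Nat.le_add_left 1 n)).some
  have hcover' : ∀ x, ∃ m, x ∈ interior (S (m+1)) := by
    intro x
    obtain ⟨n, hn1, hx⟩ := hcover x
    refine ⟨n - 1, ?_⟩
    have hn : n - 1 + 1 = n := by omega
    rw [hn]; exact hx
  -- g is continuous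
  have hgc : Continuous g := by
    rw [continuous_iff_continuousAt]
    intro x
    obtain ⟨m, hx⟩ := hcover' x
    have hev : (gs (m+1) : X → X) =ᶠ[nhds x] g := by
      filter_upwards [isOpen_interior.mem_nhds hx] with y hy
      exact (hg (m+1) (Nat.le_add_left 1 m) y (interior_subset hy)).symm
    exact ((gs (m+1)).continuous.continuousAt).congr hev
  -- the homotopies are rel, so they agree with g
  have hFg : ∀ m n : ℕ, m ≤ n → ∀ x ∈ S (m+1), ∀ t : I, F n (t, x) = g x := by
    intro m n hmn x hx t
    have hx' : x ∈ S (n+1) := hmono (by omega) hx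
    rw [(F n).eq_fst t hx']
    exact (hg (n+1) (Nat.le_add_left 1 n) x hx').symm
  -- the infinite concatenation
  set Hfun : I × X → X := fun p =>
    if (p.1 : ℝ) < 1 then
      F (stmt4N p.1) (Set.projIcc 0 1 zero_le_one (stmt4s (stmt4N p.1) p.1), p.2)
    else g p.2 with hHfun
  -- pieces are continuous
  have hK : ∀ n : ℕ, Continuous (fun p : I × X =>
      F n (Set.projIcc 0 1 zero_le_one (stmt4s n p.1), p.2)) := by
    intro n
    apply (F n).continuous.comp
    exact ((continuous_projIcc.comp ((stmt4s_continuous n).comp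
      (continuous_subtype_val.comp continuous_fst))).prodMk continuous_snd)
  have hcont : Continuous Hfun := by
    rw [continuous_iff_continuousAt]
    rintro ⟨t₀, x₀⟩
    by_cases h1 : (t₀ : ℝ) < 1
    · have ht0 : (0:ℝ) ≤ t₀ := t₀.2.1
      set n := stmt4N (t₀ : ℝ) with hn
      have hl : stmt4tpt n ≤ t₀ := stmt4N_le ht0 h1
      have hr : (t₀:ℝ) < stmt4tpt (n+1) := stmt4N_lt ht0 h1
      rcases eq_or_lt_of_le hl with heq | hlt
      · -- boundary case t₀ = tpt n
        match n, heq, hr with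
        | 0, heq, hr =>
          -- near the left endpoint
          have hW : IsOpen {p : I × X | (p.1 : ℝ) < stmt4tpt 1} :=
            (isOpen_Iio.preimage (continuous_subtype_val.comp continuous_fst))
          have hmem : (t₀, x₀) ∈ {p : I × X | (p.1 : ℝ) < stmt4tpt 1} := by
            simpa using hr
          apply ContinuousAt.congr ((hK 0).continuousAt)
          filter_upwards [hW.mem_nhds hmem] with p hp
          have hp1 : (p.1:ℝ) < 1 := lt_trans hp (stmt4tpt_lt_one 1)
          have hN : stmt4N (p.1:ℝ) = 0 := by
            apply stmt4N_eq hp1 _ (by simpa [stmt4tpt_zero] using hp)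
            rw [stmt4tpt_zero]; exact p.1.2.1
          simp only [hHfun]
          rw [if_pos hp1, hN]
        | (m+1), heq, hr =>
          -- glue F m and F (m+1)
          set K : I × X → X := fun p =>
            if (p.1 : ℝ) ≤ stmt4tpt (m+1) then
              F m (Set.projIcc 0 1 zero_le_one (stmt4s m p.1), p.2)
            else F (m+1) (Set.projIcc 0 1 zero_le_one (stmt4s (m+1) p.1), p.2) with hKdef
          have hKc : Continuous K := by
            apply Continuous.if_le (hK m) (hK (m+1))
              (continuous_subtype_val.comp continuous_fst) continuous_const
            intro p hp
            simp only [Function.comp_apply] at hp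
            rw [hp, stmt4s_succ, stmt4s_self]
            rw [Set.projIcc_right, Set.projIcc_left, Set.Icc.mk_one, Set.Icc.mk_zero]
            rw [(F m).apply_one, (F (m+1)).apply_zero]
          have hW : IsOpen {p : I × X | stmt4tpt m < (p.1 : ℝ) ∧ (p.1:ℝ) < stmt4tpt (m+2)} := by
            apply IsOpen.inter
            · exact isOpen_Ioi.preimage (continuous_subtype_val.comp continuous_fst)
            · exact isOpen_Iio.preimage (continuous_subtype_val.comp continuous_fst)
          have hmem : (t₀, x₀) ∈ {p : I × X | stmt4tpt m < (p.1 : ℝ) ∧ (p.1:ℝ) < stmt4tpt (m+2)} := by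
            constructor
            · rw [← heq]; exact stmt4tpt_mono (by omega)
            · rw [← heq]; exact stmt4tpt_mono (by omega)
          apply ContinuousAt.congr hKc.continuousAt
          filter_upwards [hW.mem_nhds hmem] with p hp
          obtain ⟨hpl, hpr⟩ := hp
          have hp1 : (p.1:ℝ) < 1 := lt_trans hpr (stmt4tpt_lt_one (m+2))
          rcases lt_trichotomy ((p.1:ℝ)) (stmt4tpt (m+1)) with hc | hc | hc
          · have hN : stmt4N (p.1:ℝ) = m := stmt4N_eq hp1 hpl.le hc
            simp only [hHfun, hKdef]
            rw [if_pos hp1, if_pos hc.le, hN]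
          · have hN : stmt4N (p.1:ℝ) = m+1 := stmt4N_eq hp1 hc.ge (by rw [hc]; exact stmt4tpt_mono (by omega))
            have e2 : stmt4s (m+1) (p.1:ℝ) = 0 := by rw [hc, stmt4s_self]
            have e3 : stmt4s m (p.1:ℝ) = 1 := by rw [hc, stmt4s_succ]
            simp only [hHfun, hKdef]
            rw [if_pos hp1, if_pos hc.le, hN, e2, e3]
            rw [Set.projIcc_right, Set.projIcc_left, Set.Icc.mk_one, Set.Icc.mk_zero]
            rw [(F m).apply_one, (F (m+1)).apply_zero]
          · have hN : stmt4N (p.1:ℝ) = m+1 := stmt4N_eq hp1 hc.le (by exact hpr)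
            simp only [hHfun, hKdef]
            rw [if_pos hp1, if_neg (not_le.2 hc), hN]
      · -- interior case tpt n < t₀
        have hW : IsOpen {p : I × X | stmt4tpt n < (p.1 : ℝ) ∧ (p.1:ℝ) < stmt4tpt (n+1)} := by
          apply IsOpen.inter
          · exact isOpen_Ioi.preimage (continuous_subtype_val.comp continuous_fst)
          · exact isOpen_Iio.preimage (continuous_subtype_val.comp continuous_fst)
        have hmem : (t₀, x₀) ∈ {p : I × X | stmt4tpt n < (p.1 : ℝ) ∧ (p.1:ℝ) < stmt4tpt (n+1)} :=
          ⟨hlt, hr⟩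
        apply ContinuousAt.congr ((hK n).continuousAt)
        filter_upwards [hW.mem_nhds hmem] with p hp
        obtain ⟨hpl, hpr⟩ := hp
        have hp1 : (p.1:ℝ) < 1 := lt_trans hpr (stmt4tpt_lt_one (n+1))
        have hN : stmt4N (p.1:ℝ) = n := stmt4N_eq hp1 hpl.le hpr
        simp only [hHfun]
        rw [if_pos hp1, hN]
    · -- t₀ = 1 : near the end, Hfun is g ∘ snd
      obtain ⟨m, hx⟩ := hcover' x₀
      have hW : IsOpen {p : I × X | stmt4tpt m < (p.1 : ℝ) ∧ p.2 ∈ interior (S (m+1))} := by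
        apply IsOpen.inter
        · exact isOpen_Ioi.preimage (continuous_subtype_val.comp continuous_fst)
        · exact isOpen_interior.preimage continuous_snd
      have ht1 : (t₀:ℝ) = 1 := le_antisymm t₀.2.2 (not_lt.1 h1)
      have hmem : (t₀, x₀) ∈ {p : I × X | stmt4tpt m < (p.1 : ℝ) ∧ p.2 ∈ interior (S (m+1))} :=
        ⟨by rw [ht1]; exact stmt4tpt_lt_one m, hx⟩
      apply ContinuousAt.congr (hgc.comp continuous_snd).continuousAt
      filter_upwards [hW.mem_nhds hmem] with p hp
      obtain ⟨hpl, hpx⟩ := hp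
      by_cases hp1 : (p.1:ℝ) < 1
      · have hge : m ≤ stmt4N (p.1:ℝ) := stmt4N_ge p.1.2.1 hp1 hpl.le
        simp only [hHfun]
        rw [if_pos hp1]
        exact (hFg m _ hge p.2 (interior_subset hpx) _).symm
      · simp only [hHfun]
        rw [if_neg hp1]
        rfl
  refine ⟨hgc, ⟨⟨⟨Hfun, hcont⟩, ?_, ?_⟩⟩⟩
  · intro x
    show Hfun (0, x) = gs 1 x
    have h01 : ((0:I):ℝ) < 1 := by norm_num
    have hc0 : ((0:I):ℝ) = 0 := rfl
    have h01 : ((0:I):ℝ) < 1 := by rw [hc0]; norm_num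
    have hpos : (0:ℝ) < stmt4tpt 1 := by
      have h := stmt4tpt_mono (show 0 < 1 by omega)
      rwa [stmt4tpt_zero] at h
    have hN : stmt4N ((0:I):ℝ) = 0 := by
      apply stmt4N_eq h01
      · rw [stmt4tpt_zero, hc0]
      · rw [hc0]; exact hpos
    have hs : stmt4s 0 ((0:I):ℝ) = 0 := by simp [stmt4s, stmt4tpt, hc0]
    simp only [hHfun]
    rw [if_pos h01, hN, hs, Set.projIcc_left, Set.Icc.mk_zero]
    exact (F 0).apply_zero x
  · intro x
    show Hfun (1, x) = g x
    have h11 : ¬ ((1:I):ℝ) < 1 := by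
      rw [show ((1:I):ℝ) = 1 from rfl]; norm_num
    simp only [hHfun]
    rw [if_neg h11]
end
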